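/- arXiv:1610.00937 — 5 statements merged into one kernel-verified Lean document; each statement's English description precedes it below -/
import Mathlib

section
/- Let a, b, c be reals with b > 0, ab − c² > 0, and define for r ∈ ℝ: Q(r) = a − 2c·r + b·r², and CE(r) = ((a − c·r)·I₁ − (c − b·r)·I₂)/√Q(r) for fixed constants I₁ > 0, I₂ ∈ ℝ. Then the derivative of CE at r is CE'(r) = ((c² − ab)·r·I₁ + (ab − c²)·I₂)/Q(r)^{3/2}; in particular CE'(r) = 0 if and only if r = I₂/I₁. -/
theorem cross_efficiency_derivative (a b c I₁ I₂ : ℝ)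
    (hb : 0 < b) (hd : 0 < a * b - c ^ 2) (hI₁ : 0 < I₁)
    (Q CE : ℝ → ℝ)
    (hQ : Q = fun r => a - 2 * c * r + b * r ^ 2)
    (hCE : CE = fun r => ((a - c * r) * I₁ - (c - b * r) * I₂) / Real.sqrt (Q r)) :
    ∀ r : ℝ,
      HasDerivAt CE
        (((c ^ 2 - a * b) * r * I₁ + (a * b - c ^ 2) * I₂) / Real.sqrt (Q r) ^ 3) r ∧
      ((((c ^ 2 - a * b) * r * I₁ + (a * b - c ^ 2) * I₂) / Real.sqrt (Q r) ^ 3 = 0)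
        ↔ r = I₂ / I₁) := by
  subst hQ hCE
  intro r
  have hQpos : ∀ x : ℝ, 0 < a - 2 * c * x + b * x ^ 2 := by
    intro x
    nlinarith [sq_nonneg (b * x - c), hb, hd]
  have hs : 0 < Real.sqrt (a - 2 * c * r + b * r ^ 2) :=
    Real.sqrt_pos.mpr (hQpos r)
  set s := Real.sqrt (a - 2 * c * r + b * r ^ 2) with hsdef
  have hs2 : s ^ 2 = a - 2 * c * r + b * r ^ 2 := Real.sq_sqrt (hQpos r).le
  have hQd : HasDerivAt (fun x : ℝ => a - 2 * c * x + b * x ^ 2) (2 * b * r - 2 * c) r := by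
    have h := ((hasDerivAt_const r a).sub ((hasDerivAt_id r).const_mul (2 * c))).add
      ((hasDerivAt_pow 2 r).const_mul b)
    refine h.congr_deriv ?_
    simp; ring
  have hSd : HasDerivAt (fun x : ℝ => Real.sqrt (a - 2 * c * x + b * x ^ 2))
      (1 / (2 * s) * (2 * b * r - 2 * c)) r :=
    (Real.hasDerivAt_sqrt (hQpos r).ne').comp r hQd
  have hNd : HasDerivAt (fun x : ℝ => (a - c * x) * I₁ - (c - b * x) * I₂)
      (-c * I₁ + b * I₂) r := by
    have h := (((hasDerivAt_const r a).sub ((hasDerivAt_id r).const_mul c)).mul_const I₁).sub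
      (((hasDerivAt_const r c).sub ((hasDerivAt_id r).const_mul b)).mul_const I₂)
    refine h.congr_deriv ?_
    ring
  have hdiv := hNd.div hSd hs.ne'
  have hkey : ((-c * I₁ + b * I₂) * s -
        ((a - c * r) * I₁ - (c - b * r) * I₂) * (1 / (2 * s) * (2 * b * r - 2 * c))) / s ^ 2
      = ((c ^ 2 - a * b) * r * I₁ + (a * b - c ^ 2) * I₂) / s ^ 3 := by
    rw [div_eq_div_iff (by positivity) (by positivity)]
    field_simp
    linear_combination (-c * I₁ + b * I₂) * hs2
  constructor
  · exact hkey ▸ hdiv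
  · constructor
    · intro h
      have hnum : (c ^ 2 - a * b) * r * I₁ + (a * b - c ^ 2) * I₂ = 0 := by
        have hs3 : s ^ 3 ≠ 0 := by positivity
        exact (div_eq_zero_iff.mp h).resolve_right hs3
      have h2 : (a * b - c ^ 2) * (I₂ - r * I₁) = 0 := by linarith [hnum]; 
      have h3 : I₂ - r * I₁ = 0 := by
        rcases mul_eq_zero.mp h2 with h | h
        · exact absurd h hd.ne'
        · exact h
      field_simp
      linarith
    · intro h
      subst h
      have : (c ^ 2 - a * b) * (I₂ / I₁) * I₁ + (a * b - c ^ 2) * I₂ = 0 := by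
        field_simp; ring
      rw [this, zero_div]
end

section
/- Let a, b, c be reals with b > 0, ab − c² > 0, I₁ > 0, I₂ ∈ ℝ, Q(r) = a − 2c·r + b·r², and CE(r) = ((a − c·r)·I₁ − (c − b·r)·I₂)/√Q(r). Then CE''(r₀) = (c² − ab)·I₁/Q(r₀)^{3/2} < 0 at r₀ = I₂/I₁, so CE attains a strict local maximum at r₀ = I₂/I₁. -/
theorem cross_efficiency_second_derivative (a b c I₁ I₂ : ℝ)
    (hb : 0 < b) (hd : 0 < a * b - c ^ 2) (hI₁ : 0 < I₁)
    (Q CE : ℝ → ℝ)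
    (hQ : Q = fun r => a - 2 * c * r + b * r ^ 2)
    (hCE : CE = fun r => ((a - c * r) * I₁ - (c - b * r) * I₂) / Real.sqrt (Q r))
    (r₀ : ℝ) (hr₀ : r₀ = I₂ / I₁) :
    deriv (deriv CE) r₀ = (c ^ 2 - a * b) * I₁ / Real.sqrt (Q r₀) ^ 3 ∧
    (c ^ 2 - a * b) * I₁ / Real.sqrt (Q r₀) ^ 3 < 0 ∧
    (∀ᶠ r in nhdsWithin r₀ {r₀}ᶜ, CE r < CE r₀) := by
  have hQpos : ∀ r, 0 < Q r := by
    intro r; rw [hQ]; dsimp only; nlinarith [sq_nonneg (b*r - c)]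
  have hspos : ∀ r, 0 < Real.sqrt (Q r) := fun r => Real.sqrt_pos.mpr (hQpos r)
  have hs2 : ∀ r, Real.sqrt (Q r) ^ 2 = Q r := fun r => Real.sq_sqrt (hQpos r).le
  have hQd : ∀ r, HasDerivAt Q (2*b*r - 2*c) r := by
    intro r
    rw [hQ]
    have h1 : HasDerivAt (fun r : ℝ => a - 2*c*r + b*r^2)
        (-(2*c*1) + b*(2*r^1)) r :=
      ((((hasDerivAt_id r).const_mul (2*c)).const_sub a).add
        ((hasDerivAt_pow 2 r).const_mul b) : _)
    convert h1 using 1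
    ring
  have hsd : ∀ r, HasDerivAt (fun r => Real.sqrt (Q r))
      ((2*b*r - 2*c) / (2 * Real.sqrt (Q r))) r := by
    intro r
    have h := (Real.hasDerivAt_sqrt (hQpos r).ne').comp r (hQd r)
    refine h.congr_deriv ?_
    field_simp
  have hCEd : ∀ r, HasDerivAt CE
      ((a*b - c^2)*(I₂ - I₁*r) / Real.sqrt (Q r) ^ 3) r := by
    intro r
    rw [hCE]
    have hN : HasDerivAt (fun r : ℝ => (a - c*r)*I₁ - (c - b*r)*I₂)
        ((-(c*1))*I₁ - (-(b*1))*I₂) r :=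
      ((((hasDerivAt_id r).const_mul c).const_sub a).mul_const I₁).sub
        ((((hasDerivAt_id r).const_mul b).const_sub c).mul_const I₂)
    have hdiv := hN.div (hsd r) (hspos r).ne'
    refine hdiv.congr_deriv ?_
    have h2 : Real.sqrt (Q r) ^ 2 = a - 2*c*r + b*r^2 := by
      rw [hs2 r, hQ]
    have hsne := (hspos r).ne'
    have hsp := hspos r
    set s := Real.sqrt (Q r) with hsdef
    have hkey : (a*b - c^2)*(I₂ - I₁*r) =
        ((-(c*1))*I₁ - (-(b*1))*I₂) * s^2
          - ((a - c*r)*I₁ - (c - b*r)*I₂)*(b*r - c) := by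
      rw [h2]; ring
    field_simp
    linear_combination (b*I₂ - c*I₁) * h2
  have hderivfun : deriv CE = fun r => (a*b - c^2)*(I₂ - I₁*r) / Real.sqrt (Q r) ^ 3 :=
    funext fun r => (hCEd r).deriv
  have hz : I₂ - I₁ * r₀ = 0 := by
    rw [hr₀]; field_simp; ring
  -- second derivative at r₀
  have hg2 : HasDerivAt (fun r => (a*b - c^2)*(I₂ - I₁*r) / Real.sqrt (Q r) ^ 3)
      ((c ^ 2 - a * b) * I₁ / Real.sqrt (Q r₀) ^ 3) r₀ := by
    have hnum : HasDerivAt (fun r : ℝ => (a*b - c^2)*(I₂ - I₁*r))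
        ((a*b - c^2)*(-(I₁*1))) r₀ :=
      (((hasDerivAt_id r₀).const_mul I₁).const_sub I₂).const_mul (a*b - c^2)
    have hden : HasDerivAt (fun r => Real.sqrt (Q r) ^ 3)
        (3 * Real.sqrt (Q r₀) ^ 2 * ((2*b*r₀ - 2*c) / (2 * Real.sqrt (Q r₀)))) r₀ := by
      have := (hsd r₀).pow 3
      refine this.congr_deriv ?_
      norm_num
    have hdne : Real.sqrt (Q r₀) ^ 3 ≠ 0 := (pow_pos (hspos r₀) 3).ne'
    have hdiv := hnum.div hden hdne
    refine hdiv.congr_deriv ?_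
    rw [hz]
    have hsne := (hspos r₀).ne'
    field_simp
    ring
  have h1 : deriv (deriv CE) r₀ = (c ^ 2 - a * b) * I₁ / Real.sqrt (Q r₀) ^ 3 := by
    rw [hderivfun]; exact hg2.deriv
  have h2 : (c ^ 2 - a * b) * I₁ / Real.sqrt (Q r₀) ^ 3 < 0 := by
    apply div_neg_of_neg_of_pos
    · have : c ^ 2 - a * b < 0 := by linarith
      exact mul_neg_of_neg_of_pos this hI₁
    · exact pow_pos (hspos r₀) 3
  refine ⟨h1, h2, ?_⟩
  have hcont : ContinuousOn CE Set.univ := fun x _ =>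
    (hCEd x).continuousAt.continuousWithinAt
  have hmono : StrictMonoOn CE (Set.Iic r₀) := by
    apply strictMonoOn_of_deriv_pos (convex_Iic r₀) (hcont.mono (Set.subset_univ _))
    intro x hx
    rw [interior_Iic, Set.mem_Iio] at hx
    rw [hderivfun]
    apply div_pos
    · apply mul_pos hd
      nlinarith
    · exact pow_pos (hspos x) 3
  have hanti : StrictAntiOn CE (Set.Ici r₀) := by
    apply strictAntiOn_of_deriv_neg (convex_Ici r₀) (hcont.mono (Set.subset_univ _))
    intro x hx
    rw [interior_Ici, Set.mem_Ioi] at hx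
    rw [hderivfun]
    apply div_neg_of_neg_of_pos
    · apply mul_neg_of_pos_of_neg hd
      nlinarith
    · exact pow_pos (hspos x) 3
  filter_upwards [self_mem_nhdsWithin] with x hx
  have hne : x ≠ r₀ := hx
  rcases lt_or_gt_of_ne hne with h | h
  · exact hmono (Set.mem_Iic.mpr h.le) Set.self_mem_Iic h
  · exact hanti Set.self_mem_Ici (Set.mem_Ici.mpr h.le) h
end

section
/- Let Σ be symmetric positive definite, μ ∈ ℝⁿ not proportional to 1ₙ, with c = 1ₙᵀΣ⁻¹μ > 0. Fix risk-free rates r_f^i ≠ r_f^j in [0, c/b) with associated MSR portfolios (σ_i, r_i) and (σ_j, r_j) given by the closed-form MSR formulas. Then the cross-efficiency Ef_i(r_f^j) = ((r_i − r_f^j)/σ_i) / ((r_j − r_f^j)/σ_j) satisfies 0 < Ef_i(r_f^j) < 1, i.e. the Sharpe ratio of portfolio i evaluated at risk-free rate r_f^j is strictly smaller than the optimal Sharpe ratio attained by portfolio j. -/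
open Matrix

theorem cross_efficiency_lt_one (n : ℕ)
    (S : Matrix (Fin n) (Fin n) ℝ) (hS : S.PosDef)
    (μ : Fin n → ℝ)
    (one : Fin n → ℝ) (hone : one = fun _ => 1)
    (hμ : ¬ ∃ t : ℝ, μ = t • one)
    (a b c : ℝ)
    (ha : a = μ ⬝ᵥ S⁻¹ *ᵥ μ)
    (hb : b = one ⬝ᵥ S⁻¹ *ᵥ one)
    (hc : c = one ⬝ᵥ S⁻¹ *ᵥ μ)
    (hcpos : 0 < c)
    (rfi rfj : ℝ)
    (hi : rfi ∈ Set.Ico (0 : ℝ) (c / b))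
    (hj : rfj ∈ Set.Ico (0 : ℝ) (c / b))
    (hij : rfi ≠ rfj)
    (σi ri σj rj Ef : ℝ)
    (hσi : σi = Real.sqrt (a - 2 * c * rfi + b * rfi ^ 2) / (c - b * rfi))
    (hri : ri = (a - c * rfi) / (c - b * rfi))
    (hσj : σj = Real.sqrt (a - 2 * c * rfj + b * rfj ^ 2) / (c - b * rfj))
    (hrj : rj = (a - c * rfj) / (c - b * rfj))
    (hEf : Ef = ((ri - rfj) / σi) / ((rj - rfj) / σj)) :
    0 < Ef ∧ Ef < 1 := by
  -- Step 1: positivity facts from positive definiteness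
  have hSi := hS.inv
  have hn : 0 < n := by
    rcases Nat.eq_zero_or_pos n with h | h
    · exact absurd ⟨0, by subst h; funext i; exact i.elim0⟩ hμ
    · exact h
  have hone0 : one ≠ 0 := by
    subst hone; intro h
    have := congrFun h ⟨0, hn⟩; simp at this
  have hbpos : 0 < b := by
    have := hSi.dotProduct_mulVec_pos hone0
    simpa [hb] using this
  have hsym : ∀ u v : Fin n → ℝ, u ⬝ᵥ S⁻¹ *ᵥ v = v ⬝ᵥ S⁻¹ *ᵥ u := by
    intro u v
    have hH : S⁻¹ᵀ = S⁻¹ := by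
      have := hSi.1
      simpa [Matrix.IsHermitian] using this
    rw [Matrix.dotProduct_mulVec, ← Matrix.mulVec_transpose, hH, dotProduct_comm]
  have hd : 0 < a * b - c ^ 2 := by
    set v := b • μ - c • one with hv
    have hv0 : v ≠ 0 := by
      intro h
      apply hμ
      refine ⟨c / b, ?_⟩
      funext i
      have := congrFun h i
      simp [hv, sub_eq_zero] at this
      have : b * μ i = c * one i := this
      rw [Pi.smul_apply, smul_eq_mul, div_mul_eq_mul_div, eq_div_iff hbpos.ne']
      linarith [this]
    have hq := hSi.dotProduct_mulVec_pos hv0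
    have hexp : v ⬝ᵥ S⁻¹ *ᵥ v = b ^ 2 * a - 2 * b * c * c + c ^ 2 * b := by
      simp only [hv, sub_dotProduct, smul_dotProduct, Matrix.mulVec_sub, Matrix.mulVec_smul,
        dotProduct_sub, dotProduct_smul, smul_eq_mul]
      rw [ha, hb, hc, hsym μ one]
      ring
    have hq' : 0 < b ^ 2 * a - 2 * b * c * c + c ^ 2 * b := by
      have := hq; rw [show star v = v from rfl, hexp] at this; exact this
    nlinarith
  -- Step 2: real-number inequalities
  obtain ⟨hx0, hx1⟩ := hi
  obtain ⟨hy0, hy1⟩ := hj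
  set x := rfi
  set y := rfj
  have hcx : 0 < c - b * x := by
    have : x * b < c / b * b := by exact mul_lt_mul_of_pos_right hx1 hbpos
    rw [div_mul_cancel₀ _ (ne_of_gt hbpos)] at this
    linarith
  have hcy : 0 < c - b * y := by
    have : y * b < c / b * b := by exact mul_lt_mul_of_pos_right hy1 hbpos
    rw [div_mul_cancel₀ _ (ne_of_gt hbpos)] at this
    linarith
  set Qx := a - 2 * c * x + b * x ^ 2 with hQx
  set Qy := a - 2 * c * y + b * y ^ 2 with hQy
  have hQxpos : 0 < Qx := by nlinarith [sq_nonneg (c - b * x)]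
  have hQypos : 0 < Qy := by nlinarith [sq_nonneg (c - b * y)]
  set N := a - c * x - c * y + b * x * y with hN
  have hNpos : 0 < N := by nlinarith
  have hkey : N ^ 2 < Qx * Qy := by
    have hxy0 : x - y ≠ 0 := sub_ne_zero.mpr hij
    have hxy : (x - y) ^ 2 > 0 := by positivity
    have hid : Qx * Qy - N ^ 2 = (a * b - c ^ 2) * (x - y) ^ 2 := by ring
    linarith [mul_pos hd hxy]
  have hsx := Real.sqrt_pos.mpr hQxpos
  have hsy := Real.sqrt_pos.mpr hQypos
  have hsx2 : Real.sqrt Qx ^ 2 = Qx := Real.sq_sqrt hQxpos.le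
  have hsy2 : Real.sqrt Qy ^ 2 = Qy := Real.sq_sqrt hQypos.le
  -- Step 3: compute the Sharpe ratios
  have hdiv : ∀ p q r : ℝ, r ≠ 0 → p / r / (q / r) = p / q := by
    intro p q r hr
    rw [div_div_div_comm, div_self hr, div_one]
  have hri' : (ri - y) / σi = N / Real.sqrt Qx := by
    rw [hri, hσi, show (a - c * x) / (c - b * x) - y = N / (c - b * x) by
      rw [eq_div_iff hcx.ne', sub_mul, div_mul_cancel₀ _ hcx.ne', hN]; ring, hdiv _ _ _ hcx.ne']
  have hrj' : (rj - y) / σj = Real.sqrt Qy := by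
    rw [hrj, hσj, show (a - c * y) / (c - b * y) - y = Qy / (c - b * y) by
      rw [eq_div_iff hcy.ne', sub_mul, div_mul_cancel₀ _ hcy.ne', hQy]; ring, hdiv _ _ _ hcy.ne']
    rw [div_eq_iff hsy.ne']
    exact (Real.mul_self_sqrt hQypos.le).symm
  have hEf' : Ef = N / (Real.sqrt Qx * Real.sqrt Qy) := by
    rw [hEf, hri', hrj', div_div]
  constructor
  · rw [hEf']; positivity
  · rw [hEf', div_lt_one (by positivity)]
    refine lt_of_pow_lt_pow_left₀ 2 (by positivity) ?_
    rw [mul_pow, hsx2, hsy2]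
    exact hkey
end

section
/- Let Σ be symmetric positive definite, μ ∈ ℝⁿ, r_f ∈ ℝ. A vector w ∈ ℝⁿ with wᵀ1ₙ = 1, wᵀμ > r_f, w ≥ 0 componentwise maximizes (wᵀ(μ − r_f·1ₙ))/√(wᵀΣw) over {w : wᵀ1ₙ = 1, w ≥ 0, wᵀ(μ−r_f·1ₙ) > 0} if and only if the vector x = w/(wᵀ(μ − r_f·1ₙ)) minimizes xᵀΣx over {x ∈ ℝⁿ : xᵀ(μ − r_f·1ₙ) = 1, x ≥ 0}; moreover each optimal x of the quadratic program recovers an optimal w via w = x/(xᵀ1ₙ). -/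
open Matrix

/-- Quadratic form is positive on nonzero vectors, real case. -/
lemma quad_pos {n : ℕ} {S : Matrix (Fin n) (Fin n) ℝ} (hS : S.PosDef)
    {v : Fin n → ℝ} (hv : v ≠ 0) : 0 < v ⬝ᵥ S *ᵥ v := by
  simpa using hS.dotProduct_mulVec_pos hv

lemma quad_smul {n : ℕ} (S : Matrix (Fin n) (Fin n) ℝ) (v : Fin n → ℝ) (c : ℝ) :
    (c • v) ⬝ᵥ S *ᵥ (c • v) = c ^ 2 * (v ⬝ᵥ S *ᵥ v) := by
  rw [mulVec_smul, smul_dotProduct, dotProduct_smul, smul_eq_mul, smul_eq_mul]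
  ring

/-- Invariance of the Sharpe ratio under positive scaling. -/
lemma sharpe_smul {n : ℕ} (S : Matrix (Fin n) (Fin n) ℝ) (e : Fin n → ℝ)
    (v : Fin n → ℝ) {c : ℝ} (hc : 0 < c) :
    ((c • v) ⬝ᵥ e) / Real.sqrt ((c • v) ⬝ᵥ S *ᵥ (c • v))
      = (v ⬝ᵥ e) / Real.sqrt (v ⬝ᵥ S *ᵥ v) := by
  rw [quad_smul, smul_dotProduct, smul_eq_mul]
  rw [Real.sqrt_mul (by positivity), Real.sqrt_sq hc.le]
  rw [mul_div_mul_left _ _ hc.ne']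

/-- Sharpe ratio of a vector with unit excess return. -/
lemma sharpe_unit {n : ℕ} (S : Matrix (Fin n) (Fin n) ℝ) (e : Fin n → ℝ)
    {x : Fin n → ℝ} (hx : x ⬝ᵥ e = 1) :
    (x ⬝ᵥ e) / Real.sqrt (x ⬝ᵥ S *ᵥ x) = 1 / Real.sqrt (x ⬝ᵥ S *ᵥ x) := by
  rw [hx]

lemma ne_zero_of_dot {n : ℕ} {v u : Fin n → ℝ} {a : ℝ} (h : v ⬝ᵥ u = a)
    (ha : a ≠ 0) : v ≠ 0 := by
  rintro rfl
  simp [dotProduct] at h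
  exact ha h.symm

lemma dot_one_pos {n : ℕ} {v : Fin n → ℝ} (hv : ∀ i, 0 ≤ v i) (h0 : v ≠ 0) :
    0 < v ⬝ᵥ (fun _ => 1) := by
  have : ∃ i, v i ≠ 0 := by
    by_contra h
    push_neg at h
    exact h0 (funext h)
  obtain ⟨i, hi⟩ := this
  have hi' : 0 < v i := lt_of_le_of_ne (hv i) (Ne.symm hi)
  unfold dotProduct
  simp only [mul_one]
  exact Finset.sum_pos' (fun j _ => hv j) ⟨i, Finset.mem_univ i, hi'⟩

/-- Comparison of quadratic forms vs Sharpe ratios for unit-excess vectors. -/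
lemma quad_le_iff {n : ℕ} {S : Matrix (Fin n) (Fin n) ℝ} (hS : S.PosDef)
    {x x' : Fin n → ℝ} (hx : x ≠ 0) (hx' : x' ≠ 0) :
    x ⬝ᵥ S *ᵥ x ≤ x' ⬝ᵥ S *ᵥ x' ↔
      1 / Real.sqrt (x' ⬝ᵥ S *ᵥ x') ≤ 1 / Real.sqrt (x ⬝ᵥ S *ᵥ x) := by
  have hq : 0 < x ⬝ᵥ S *ᵥ x := quad_pos hS hx
  have hq' : 0 < x' ⬝ᵥ S *ᵥ x' := quad_pos hS hx'
  rw [div_le_div_iff₀ (Real.sqrt_pos.mpr hq') (Real.sqrt_pos.mpr hq), one_mul, one_mul,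
    Real.sqrt_le_sqrt_iff hq'.le]

theorem no_short_sales_equivalence (n : ℕ)
    (S : Matrix (Fin n) (Fin n) ℝ) (hS : S.PosDef)
    (μ : Fin n → ℝ) (rf : ℝ)
    (one : Fin n → ℝ) (hone : one = fun _ => 1)
    (e : Fin n → ℝ) (he : e = μ - rf • one) :
    (∀ w : Fin n → ℝ, w ⬝ᵥ one = 1 → w ⬝ᵥ μ > rf → (∀ i, 0 ≤ w i) →
      ((∀ w' : Fin n → ℝ, w' ⬝ᵥ one = 1 → (∀ i, 0 ≤ w' i) → w' ⬝ᵥ e > 0 →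
          (w' ⬝ᵥ e) / Real.sqrt (w' ⬝ᵥ S *ᵥ w') ≤ (w ⬝ᵥ e) / Real.sqrt (w ⬝ᵥ S *ᵥ w))
        ↔
       (∀ x' : Fin n → ℝ, x' ⬝ᵥ e = 1 → (∀ i, 0 ≤ x' i) →
          ((1 / (w ⬝ᵥ e)) • w) ⬝ᵥ S *ᵥ ((1 / (w ⬝ᵥ e)) • w) ≤ x' ⬝ᵥ S *ᵥ x'))) ∧
    (∀ x : Fin n → ℝ, x ⬝ᵥ e = 1 → (∀ i, 0 ≤ x i) →
      (∀ x' : Fin n → ℝ, x' ⬝ᵥ e = 1 → (∀ i, 0 ≤ x' i) →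
          x ⬝ᵥ S *ᵥ x ≤ x' ⬝ᵥ S *ᵥ x') →
      ((1 / (x ⬝ᵥ one)) • x) ⬝ᵥ one = 1 ∧
      (∀ i, 0 ≤ ((1 / (x ⬝ᵥ one)) • x) i) ∧
      (∀ w' : Fin n → ℝ, w' ⬝ᵥ one = 1 → (∀ i, 0 ≤ w' i) → w' ⬝ᵥ e > 0 →
        (w' ⬝ᵥ e) / Real.sqrt (w' ⬝ᵥ S *ᵥ w') ≤
          (((1 / (x ⬝ᵥ one)) • x) ⬝ᵥ e) /
            Real.sqrt (((1 / (x ⬝ᵥ one)) • x) ⬝ᵥ S *ᵥ ((1 / (x ⬝ᵥ one)) • x)))) := by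
  -- generic facts
  have hed : ∀ v : Fin n → ℝ, v ⬝ᵥ e = v ⬝ᵥ μ - rf * (v ⬝ᵥ one) := by
    intro v
    rw [he, dotProduct_sub, dotProduct_smul, smul_eq_mul]
  -- normalization to unit excess return
  have norm_unit : ∀ v : Fin n → ℝ, 0 < v ⬝ᵥ e → ((1 / (v ⬝ᵥ e)) • v) ⬝ᵥ e = 1 := by
    intro v hv
    rw [smul_dotProduct, smul_eq_mul]
    field_simp
  have norm_sharpe : ∀ v : Fin n → ℝ, 0 < v ⬝ᵥ e →
      (v ⬝ᵥ e) / Real.sqrt (v ⬝ᵥ S *ᵥ v)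
        = 1 / Real.sqrt (((1 / (v ⬝ᵥ e)) • v) ⬝ᵥ S *ᵥ ((1 / (v ⬝ᵥ e)) • v)) := by
    intro v hv
    rw [← sharpe_unit S e (norm_unit v hv), sharpe_smul S e v (by positivity)]
  constructor
  · -- first part
    intro w hw1 hwμ hw0
    have hwe : 0 < w ⬝ᵥ e := by rw [hed, hw1]; linarith
    set x := (1 / (w ⬝ᵥ e)) • w with hxdef
    have hxne : x ≠ 0 := ne_zero_of_dot (norm_unit w hwe) one_ne_zero
    constructor
    · -- maximizer → minimizer
      intro hmax x' hx'e hx'0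
      have hx'ne : x' ≠ 0 := ne_zero_of_dot hx'e one_ne_zero
      have hx'1 : 0 < x' ⬝ᵥ one := by rw [hone]; exact dot_one_pos hx'0 hx'ne
      set w' := (1 / (x' ⬝ᵥ one)) • x' with hw'def
      have hw'1 : w' ⬝ᵥ one = 1 := by
        rw [hw'def, smul_dotProduct, smul_eq_mul]; field_simp
      have hw'0 : ∀ i, 0 ≤ w' i := by
        intro i
        rw [hw'def]
        exact mul_nonneg (by positivity) (hx'0 i)
      have hw'e : 0 < w' ⬝ᵥ e := by
        rw [hw'def, smul_dotProduct, smul_eq_mul, hx'e, mul_one]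
        positivity
      have hle := hmax w' hw'1 hw'0 hw'e
      -- rewrite both sides
      have hL : (w' ⬝ᵥ e) / Real.sqrt (w' ⬝ᵥ S *ᵥ w')
          = 1 / Real.sqrt (x' ⬝ᵥ S *ᵥ x') := by
        rw [hw'def, sharpe_smul S e x' (by positivity), sharpe_unit S e hx'e]
      have hR : (w ⬝ᵥ e) / Real.sqrt (w ⬝ᵥ S *ᵥ w)
          = 1 / Real.sqrt (x ⬝ᵥ S *ᵥ x) := norm_sharpe w hwe
      rw [hL, hR] at hle
      exact (quad_le_iff hS hxne hx'ne).mpr hle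
    · -- minimizer → maximizer
      intro hmin w' hw'1 hw'0 hw'e
      set x' := (1 / (w' ⬝ᵥ e)) • w' with hx'def
      have hx'e : x' ⬝ᵥ e = 1 := norm_unit w' hw'e
      have hx'0 : ∀ i, 0 ≤ x' i := by
        intro i
        rw [hx'def]
        exact mul_nonneg (by positivity) (hw'0 i)
      have hx'ne : x' ≠ 0 := ne_zero_of_dot hx'e one_ne_zero
      have hle := hmin x' hx'e hx'0
      have := (quad_le_iff hS hxne hx'ne).mp hle
      rw [norm_sharpe w' hw'e, norm_sharpe w hwe]
      exact this
  · -- second part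
    intro x hxe hx0 hmin
    have hxne : x ≠ 0 := ne_zero_of_dot hxe one_ne_zero
    have hx1 : 0 < x ⬝ᵥ one := by rw [hone]; exact dot_one_pos hx0 hxne
    set w := (1 / (x ⬝ᵥ one)) • x with hwdef
    have hw1 : w ⬝ᵥ one = 1 := by
      rw [hwdef, smul_dotProduct, smul_eq_mul]; field_simp
    have hw0 : ∀ i, 0 ≤ w i := fun i => mul_nonneg (by positivity) (hx0 i)
    have hwe : 0 < w ⬝ᵥ e := by
      rw [hwdef, smul_dotProduct, smul_eq_mul, hxe, mul_one]
      positivity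
    refine ⟨hw1, hw0, ?_⟩
    intro w' hw'1 hw'0 hw'e
    set x' := (1 / (w' ⬝ᵥ e)) • w' with hx'def
    have hx'e : x' ⬝ᵥ e = 1 := norm_unit w' hw'e
    have hx'0 : ∀ i, 0 ≤ x' i := fun i => mul_nonneg (by positivity) (hw'0 i)
    have hx'ne : x' ≠ 0 := ne_zero_of_dot hx'e one_ne_zero
    have hle := hmin x' hx'e hx'0
    have key := (quad_le_iff hS hxne hx'ne).mp hle
    have hws : (w ⬝ᵥ e) / Real.sqrt (w ⬝ᵥ S *ᵥ w)
        = 1 / Real.sqrt (x ⬝ᵥ S *ᵥ x) := by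
      rw [hwdef, sharpe_smul S e x (by positivity), sharpe_unit S e hxe]
    rw [norm_sharpe w' hw'e, hws]
    exact key
end

section
/- Let Σ be symmetric positive definite, μ ∈ ℝⁿ with μ not proportional to 1ₙ, and a = μᵀΣ⁻¹μ, b = 1ₙᵀΣ⁻¹1ₙ, c = 1ₙᵀΣ⁻¹μ with b > 0. For every w ∈ ℝⁿ with wᵀ1ₙ = 1 and return r = wᵀμ, the variance satisfies wᵀΣw ≥ (b·r² − 2c·r + a)/(ab − c²); equivalently every feasible portfolio (σ, r) with σ = √(wᵀΣw) lies on or to the right of the hyperbola σ² = (b·r² − 2c·r + a)/(ab − c²). -/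
open Matrix

theorem frontier_hyperbola_bound (n : ℕ)
    (S : Matrix (Fin n) (Fin n) ℝ) (hS : S.PosDef)
    (μ : Fin n → ℝ)
    (one : Fin n → ℝ) (hone : one = fun _ => 1)
    (hμ : ¬ ∃ t : ℝ, μ = t • one)
    (a b c : ℝ)
    (ha : a = μ ⬝ᵥ S⁻¹ *ᵥ μ)
    (hb : b = one ⬝ᵥ S⁻¹ *ᵥ one)
    (hc : c = one ⬝ᵥ S⁻¹ *ᵥ μ)
    (hbpos : 0 < b) :
    ∀ w : Fin n → ℝ, w ⬝ᵥ one = 1 →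
      (b * (w ⬝ᵥ μ) ^ 2 - 2 * c * (w ⬝ᵥ μ) + a) / (a * b - c ^ 2) ≤
        w ⬝ᵥ S *ᵥ w := by
  intro w hw
  have hSinv : (S⁻¹).PosDef := hS.inv
  have hSym : Sᵀ = S := hS.isHermitian.eq
  have hSymInv : (S⁻¹)ᵀ = S⁻¹ := hSinv.isHermitian.eq
  have symm : ∀ (x y : Fin n → ℝ), x ⬝ᵥ S⁻¹ *ᵥ y = y ⬝ᵥ S⁻¹ *ᵥ x := by
    intro x y
    rw [dotProduct_mulVec, ← mulVec_transpose, hSymInv, dotProduct_comm]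
  have symmS : ∀ (x y : Fin n → ℝ), x ⬝ᵥ S *ᵥ y = y ⬝ᵥ S *ᵥ x := by
    intro x y
    rw [dotProduct_mulVec, ← mulVec_transpose, hSym, dotProduct_comm]
  have hSS : S * S⁻¹ = 1 := mul_nonsing_inv S (isUnit_iff_ne_zero.mpr hS.det_pos.ne')
  have hμone : μ ⬝ᵥ S⁻¹ *ᵥ one = c := by rw [symm]; exact hc.symm
  -- D = a*b - c^2 > 0
  have hD : 0 < a * b - c ^ 2 := by
    set u : Fin n → ℝ := b • μ - c • one with hu
    have hune : u ≠ 0 := by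
      intro h
      apply hμ
      refine ⟨c / b, ?_⟩
      have h2 : b • μ = c • one := sub_eq_zero.mp h
      funext i
      have := congrFun h2 i
      simp only [Pi.smul_apply, smul_eq_mul] at this ⊢
      field_simp
      linarith [this]
    have hq : 0 < u ⬝ᵥ S⁻¹ *ᵥ u := hSinv.dotProduct_mulVec_pos hune
    have hexp : u ⬝ᵥ S⁻¹ *ᵥ u = b * (a * b - c ^ 2) := by
      simp only [hu, mulVec_sub, mulVec_smul, sub_dotProduct, dotProduct_sub,
        smul_dotProduct, dotProduct_smul, smul_eq_mul]
      rw [← ha, ← hb, ← hc, hμone]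
      ring
    rw [hexp] at hq
    nlinarith
  set r : ℝ := w ⬝ᵥ μ with hr
  set D : ℝ := a * b - c ^ 2 with hDdef
  set lam : ℝ := (b * r - c) / D with hlam
  set gam : ℝ := (a - c * r) / D with hgam
  set p : Fin n → ℝ := lam • μ + gam • one with hp
  set ws : Fin n → ℝ := S⁻¹ *ᵥ p with hws
  have hSws : S *ᵥ ws = p := by
    rw [hws, mulVec_mulVec, hSS, one_mulVec]
  have hμp : μ ⬝ᵥ S⁻¹ *ᵥ p = lam * a + gam * c := by
    simp only [hp, mulVec_add, mulVec_smul, dotProduct_add, dotProduct_smul, smul_eq_mul]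
    rw [← ha, hμone]
  have honep : one ⬝ᵥ S⁻¹ *ᵥ p = lam * c + gam * b := by
    simp only [hp, mulVec_add, mulVec_smul, dotProduct_add, dotProduct_smul, smul_eq_mul]
    rw [← hb, ← hc]
  have hwsμ : ws ⬝ᵥ μ = r := by
    rw [hws, dotProduct_comm, hμp, hlam, hgam]
    field_simp
    ring
  have hwsone : ws ⬝ᵥ one = 1 := by
    rw [hws, dotProduct_comm, honep, hlam, hgam]
    field_simp
    ring
  have hpp : p ⬝ᵥ S⁻¹ *ᵥ p = (b * r ^ 2 - 2 * c * r + a) / D := by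
    have : p ⬝ᵥ S⁻¹ *ᵥ p = lam * (lam * a + gam * c) + gam * (lam * c + gam * b) := by
      rw [hp, add_dotProduct, smul_dotProduct, smul_dotProduct, smul_eq_mul, smul_eq_mul,
        hμp, honep]
    rw [this, hlam, hgam]
    field_simp
    ring
  -- decompose w = v + ws
  set v : Fin n → ℝ := w - ws with hv
  have hvμ : v ⬝ᵥ μ = 0 := by
    rw [hv, sub_dotProduct, hwsμ]; simp [hr]
  have hvone : v ⬝ᵥ one = 0 := by
    rw [hv, sub_dotProduct, hwsone, hw]; ring
  have hvp : v ⬝ᵥ p = 0 := by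
    rw [hp, dotProduct_add, dotProduct_smul, dotProduct_smul, smul_eq_mul, smul_eq_mul,
      hvμ, hvone]
    ring
  have hvv : 0 ≤ v ⬝ᵥ S *ᵥ v := hS.posSemidef.dotProduct_mulVec_nonneg v
  have hdecomp : w ⬝ᵥ S *ᵥ w = v ⬝ᵥ S *ᵥ v + 2 * (v ⬝ᵥ p) + p ⬝ᵥ S⁻¹ *ᵥ p := by
    have hwv : w = v + ws := by rw [hv, sub_add_cancel]
    have hwssws : ws ⬝ᵥ S *ᵥ ws = p ⬝ᵥ S⁻¹ *ᵥ p := by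
      rw [hSws, hws, dotProduct_comm, symm]
    have hcross : ws ⬝ᵥ S *ᵥ v = v ⬝ᵥ p := by
      rw [symmS, hSws]
    calc w ⬝ᵥ S *ᵥ w = (v + ws) ⬝ᵥ S *ᵥ (v + ws) := by rw [← hwv]
      _ = v ⬝ᵥ S *ᵥ v + v ⬝ᵥ S *ᵥ ws + (ws ⬝ᵥ S *ᵥ v + ws ⬝ᵥ S *ᵥ ws) := by
          rw [add_dotProduct, mulVec_add, dotProduct_add, dotProduct_add]
      _ = v ⬝ᵥ S *ᵥ v + 2 * (v ⬝ᵥ p) + p ⬝ᵥ S⁻¹ *ᵥ p := by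
          rw [hwssws, hcross, symmS v ws, hcross]; ring
  rw [hdecomp, hvp, hpp]
  linarith
end
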